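/- arXiv:1910.13895 — 5 statements merged into one kernel-verified Lean document; each statement's English description precedes it below -/
import Mathlib

section
/- Let Σ be a finite alphabet, T a language model over Σ, and t ≥ 0. Let P ⊆ Σ* be a finite prefix-closed set with ε ∈ P and Pr^p_T(p) > 0 for every p ∈ P. Let C be a partition of P with cluster map cl : P → C satisfying the clique condition: for all p, p' in a common cluster and all σ ∈ Σ_$, |Pr^l_T(p·σ) − Pr^l_T(p'·σ)| ≤ t. Let δ : C × Σ → C be any transition function satisfying the determinism condition δ(cl(p), σ) = cl(p·σ) whenever p ∈ P, σ ∈ Σ and p·σ ∈ P, let δ̂ be its iterated application from initial cluster cl(ε), and define δ_W(c,σ) = (Σ_{p∈c} Pr^p_T(p)·Pr^l_T(p·σ)) / (Σ_{p∈c} Pr^p_T(p)) for c ∈ C, σ ∈ Σ_$. Then the constructed automaton is t-consistent with T on p·σ for every p ∈ P and σ ∈ Σ_$; explicitly: for every k with 1 ≤ k ≤ |p|, |Pr^l_T(p_{:k}) − δ_W(δ̂(cl(ε), p_{:k−1}), p_k)| ≤ t, and |Pr^l_T(p·σ) − δ_W(δ̂(cl(ε), p), σ)| ≤ t. -/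
/-- The prefix probability `Pr^p(w) = ∑_{v ∈ Σ*} Pr(w·v)`. -/
noncomputable def prefProb {α : Type*} (Pr : List α → ℝ) (w : List α) : ℝ :=
  ∑' v : List α, Pr (w ++ v)

/-- The last-token probability `Pr^l(w·σ)` for `σ ∈ Σ_$`, where `none` plays the
role of the stopping symbol `$`. -/
noncomputable def lastTok {α : Type*} (Pr : List α → ℝ) (w : List α) : Option α → ℝ
  | none => Pr w / prefProb Pr w
  | some σ => prefProb Pr (w ++ [σ]) / prefProb Pr w

/-- The weight `δ_W(c,σ)` of cluster `c` (the fiber of the cluster map `cl` over `c`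
inside the prefix set `P`): the prefix-probability-weighted average of the members'
last-token probabilities. -/
noncomputable def clusterWeight {α C : Type*} [DecidableEq C]
    (Pr : List α → ℝ) (P : Finset (List α)) (cl : List α → C) (c : C) (σ : Option α) : ℝ :=
  (∑ p ∈ P.filter (fun p => cl p = c), prefProb Pr p * lastTok Pr p σ) /
    (∑ p ∈ P.filter (fun p => cl p = c), prefProb Pr p)


lemma weighted_avg_close {ι : Type*} (s : Finset ι) (w f : ι → ℝ)
    (hw : ∀ i ∈ s, 0 ≤ w i) (hposs : 0 < ∑ i ∈ s, w i) (x t : ℝ)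
    (hf : ∀ i ∈ s, |x - f i| ≤ t) :
    |x - (∑ i ∈ s, w i * f i) / (∑ i ∈ s, w i)| ≤ t := by
  have key : x - (∑ i ∈ s, w i * f i) / (∑ i ∈ s, w i)
      = (∑ i ∈ s, w i * (x - f i)) / (∑ i ∈ s, w i) := by
    rw [eq_div_iff hposs.ne', sub_mul, div_mul_cancel₀ _ hposs.ne']
    simp only [mul_sub, Finset.sum_sub_distrib, ← Finset.sum_mul]
    ring
  rw [key, abs_div, abs_of_pos hposs, div_le_iff₀ hposs]
  calc |∑ i ∈ s, w i * (x - f i)| ≤ ∑ i ∈ s, |w i * (x - f i)| := Finset.abs_sum_le_sum_abs _ _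
    _ ≤ ∑ i ∈ s, w i * t := by
        refine Finset.sum_le_sum fun i hi => ?_
        rw [abs_mul, abs_of_nonneg (hw i hi)]
        exact mul_le_mul_of_nonneg_left (hf i hi) (hw i hi)
    _ = t * ∑ i ∈ s, w i := by rw [← Finset.sum_mul]; ring

/-- the automaton constructed from a closed-and-consistent clustering of a
prefix-closed observation-table prefix set `P` is `t`-consistent with the target `T`
on `p·σ` for every `p ∈ P` and `σ ∈ Σ_$`: the last-token probabilities of the target
on every nonempty prefix of `p·σ` are within `t` of the corresponding transition
weights of the automaton. -/
theorem constructed_pdfa_t_consistent {α C : Type*} [Fintype α] [DecidableEq C]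
    (Pr : List α → ℝ) (hnn : ∀ w, 0 ≤ Pr w) (hsum : HasSum Pr 1)
    (t : ℝ) (ht : 0 ≤ t)
    (P : Finset (List α))
    (hpc : ∀ p ∈ P, ∀ k ≤ p.length, p.take k ∈ P)
    (hε : ([] : List α) ∈ P)
    (hpos : ∀ p ∈ P, 0 < prefProb Pr p)
    (cl : List α → C) (δ : C → α → C)
    (hclique : ∀ p ∈ P, ∀ p' ∈ P, cl p = cl p' →
      ∀ σ : Option α, |lastTok Pr p σ - lastTok Pr p' σ| ≤ t)
    (hdet : ∀ p ∈ P, ∀ σ : α, p ++ [σ] ∈ P → δ (cl p) σ = cl (p ++ [σ])) :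
    ∀ p ∈ P,
      (∀ (k : ℕ) (hk : k < p.length),
        |lastTok Pr (p.take k) (some (p.get ⟨k, hk⟩)) -
          clusterWeight Pr P cl (List.foldl δ (cl []) (p.take k)) (some (p.get ⟨k, hk⟩))| ≤ t) ∧
      (∀ σ : Option α,
        |lastTok Pr p σ - clusterWeight Pr P cl (List.foldl δ (cl []) p) σ| ≤ t) := by
  have hfold : ∀ p ∈ P, List.foldl δ (cl []) p = cl p := by
    intro p
    induction p using List.reverseRecOn with
    | nil => intro _; rfl
    | append_singleton q σ ih =>
      intro hp
      have hq : q ∈ P := by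
        have := hpc _ hp q.length (by simp)
        simpa using this
      rw [List.foldl_append, List.foldl_cons, List.foldl_nil, ih hq, hdet q hq σ hp]
  have hbound : ∀ q ∈ P, ∀ σ : Option α,
      |lastTok Pr q σ - clusterWeight Pr P cl (cl q) σ| ≤ t := by
    intro q hq σ
    refine weighted_avg_close _ _ _ (fun i hi => (hpos i (Finset.mem_filter.1 hi).1).le) ?_ _ _
      (fun i hi => hclique q hq i (Finset.mem_filter.1 hi).1
        (Finset.mem_filter.1 hi).2.symm σ)
    exact Finset.sum_pos' (fun i hi => (hpos i (Finset.mem_filter.1 hi).1).le)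
      ⟨q, Finset.mem_filter.2 ⟨hq, rfl⟩, hpos q hq⟩
  intro p hp
  refine ⟨fun k hk => ?_, fun σ => ?_⟩
  · have hq : p.take k ∈ P := hpc p hp k hk.le
    rw [hfold _ hq]
    exact hbound _ hq _
  · rw [hfold p hp]
    exact hbound p hp σ
end

section
/- Under the same hypotheses as the t-consistency theorem — Σ a finite alphabet, T a language model over Σ, t ≥ 0, P ⊆ Σ* finite prefix-closed with ε ∈ P and Pr^p_T(p) > 0 for all p ∈ P, a partition C of P with cluster map cl satisfying the clique condition (|Pr^l_T(p·σ) − Pr^l_T(p'·σ)| ≤ t for p, p' in a common cluster and σ ∈ Σ_$), δ : C × Σ → C satisfying the determinism condition (δ(cl(p),σ) = cl(p·σ) whenever p, p·σ ∈ P), δ̂ its iteration from cl(ε), and δ_W the weighted-average weights — every counterexample lies outside P: if v ∈ Σ* and a ∈ Σ_$ satisfy Pr^p_T(v) > 0 and |Pr^l_T(v·a) − δ_W(δ̂(cl(ε), v), a)| > t, then v ∉ P. Hence adding all strict prefixes of the counterexample v·a to P strictly increases P. -/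
lemma avg_bound {ι : Type*} (S : Finset ι) (w f : ι → ℝ) (x t : ℝ)
    (hw : ∀ p ∈ S, 0 ≤ w p) (hD : 0 < ∑ p ∈ S, w p)
    (hb : ∀ p ∈ S, |x - f p| ≤ t) :
    |x - (∑ p ∈ S, w p * f p) / (∑ p ∈ S, w p)| ≤ t := by
  set D := ∑ p ∈ S, w p with hDdef
  have h1 : x - (∑ p ∈ S, w p * f p) / D = (∑ p ∈ S, w p * (x - f p)) / D := by
    rw [eq_div_iff hD.ne', sub_mul, div_mul_cancel₀ _ hD.ne']
    simp [mul_sub, Finset.sum_sub_distrib, hDdef, Finset.mul_sum, mul_comm]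
  rw [h1, abs_div, abs_of_pos hD, div_le_iff₀ hD]
  calc |∑ p ∈ S, w p * (x - f p)| ≤ ∑ p ∈ S, |w p * (x - f p)| :=
        Finset.abs_sum_le_sum_abs _ _
    _ ≤ ∑ p ∈ S, w p * t := by
        refine Finset.sum_le_sum fun p hp => ?_
        rw [abs_mul, abs_of_nonneg (hw p hp)]
        exact mul_le_mul_of_nonneg_left (hb p hp) (hw p hp)
    _ = t * D := by rw [← Finset.sum_mul, mul_comm]


/-- under the hypotheses of the `t`-consistency theorem, every
counterexample `v·a` (a sequence on which the target's last-token probability and the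
hypothesis automaton's weight differ by more than `t`) satisfies `v ∉ P`; hence adding
all strict prefixes of `v·a` (i.e. all prefixes of `v`) to `P` strictly increases `P`. -/
theorem counterexample_outside_table {α C : Type*} [Fintype α] [DecidableEq α] [DecidableEq C]
    (Pr : List α → ℝ) (hnn : ∀ w, 0 ≤ Pr w) (hsum : HasSum Pr 1)
    (t : ℝ) (ht : 0 ≤ t)
    (P : Finset (List α))
    (hpc : ∀ p ∈ P, ∀ k ≤ p.length, p.take k ∈ P)
    (hε : ([] : List α) ∈ P)
    (hpos : ∀ p ∈ P, 0 < prefProb Pr p)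
    (cl : List α → C) (δ : C → α → C)
    (hclique : ∀ p ∈ P, ∀ p' ∈ P, cl p = cl p' →
      ∀ σ : Option α, |lastTok Pr p σ - lastTok Pr p' σ| ≤ t)
    (hdet : ∀ p ∈ P, ∀ σ : α, p ++ [σ] ∈ P → δ (cl p) σ = cl (p ++ [σ]))
    (v : List α) (a : Option α)
    (hv : 0 < prefProb Pr v)
    (hcex : t < |lastTok Pr v a - clusterWeight Pr P cl (List.foldl δ (cl []) v) a|) :
    v ∉ P ∧
      P ⊂ P ∪ (Finset.range (v.length + 1)).image (fun k => v.take k) := by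
  have hvP : v ∉ P := by
    intro hvP
    -- all prefixes of members of P are in P, so foldl computes cl v
    have hfold : ∀ u : List α, u ∈ P → List.foldl δ (cl []) u = cl u := by
      intro u
      induction u using List.reverseRecOn with
      | nil => intro _; simp
      | append_singleton u σ ih =>
        intro hu
        have hu' : u ∈ P := by
          have := hpc _ hu u.length (by simp)
          simpa using this
        rw [List.foldl_append, List.foldl_cons, List.foldl_nil, ih hu',
          hdet u hu' σ hu]
    rw [hfold v hvP] at hcex
    have hvS : v ∈ P.filter (fun p => cl p = cl v) := by
      simp [hvP]
    have hbound := avg_bound (P.filter (fun p => cl p = cl v))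
      (fun p => prefProb Pr p) (fun p => lastTok Pr p a) (lastTok Pr v a) t
      (fun p hp => le_of_lt (hpos p (Finset.mem_filter.mp hp).1))
      (Finset.sum_pos' (fun p hp => le_of_lt (hpos p (Finset.mem_filter.mp hp).1))
        ⟨v, hvS, hv⟩)
      (fun p hp => by
        obtain ⟨hpP, hcl⟩ := Finset.mem_filter.mp hp
        exact hclique v hvP p hpP hcl.symm a)
    rw [clusterWeight] at hcex
    exact absurd hbound (not_le.mpr hcex)
  refine ⟨hvP, ?_⟩
  have hvmem : v ∈ P ∪ (Finset.range (v.length + 1)).image (fun k => v.take k) := by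
    apply Finset.mem_union_right
    exact Finset.mem_image.mpr ⟨v.length, Finset.mem_range.mpr (by omega), by simp⟩
  exact (Finset.ssubset_iff_of_subset Finset.subset_union_left).mpr ⟨v, hvmem, hvP⟩
end

section
/- Let A = ⟨Q, Σ, δ_Q, q^i, δ_W⟩ be a PDFA such that for every state q ∈ Q there exists a sequence u ∈ Σ* of non-zero transitions from q reaching a stopping state: Π_{i=1}^{|u|} δ_W(δ̂(q, u_{:i−1}), u_i) > 0 and δ_W(δ̂(q, u), $) > 0. Then A defines a probability distribution over Σ*: Σ_{w∈Σ*} P_A(w) = 1 (and P_A(w) ≥ 0 for every w), i.e., P_A is a language model. -/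
open Finset
set_option linter.unusedSectionVars false
noncomputable section PDFAProof
open Classical

variable {Q α : Type*} [Fintype Q] [Fintype α]

def pw (δQ : Q → α → Q) (δW : Q → Option α → ℝ) (q : Q) (w : List α) : ℝ :=
  ∏ i : Fin w.length, δW (List.foldl δQ q (w.take i.1)) (some (w.get i))

def pP (δQ : Q → α → Q) (δW : Q → Option α → ℝ) (q : Q) (w : List α) : ℝ :=
  δW (List.foldl δQ q w) none * pw δQ δW q w

lemma pw_nil (δQ : Q → α → Q) (δW : Q → Option α → ℝ) (q : Q) : pw δQ δW q [] = 1 := by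
  simp [pw]

lemma pw_cons (δQ : Q → α → Q) (δW : Q → Option α → ℝ) (q : Q) (a : α) (w : List α) :
    pw δQ δW q (a :: w) = δW q (some a) * pw δQ δW (δQ q a) w := by
  unfold pw
  simp [List.length_cons, Fin.prod_univ_succ]

lemma pP_cons (δQ : Q → α → Q) (δW : Q → Option α → ℝ) (q : Q) (a : α) (w : List α) :
    pP δQ δW q (a :: w) = δW q (some a) * pP δQ δW (δQ q a) w := by
  unfold pP
  rw [pw_cons, List.foldl_cons]
  ring

/-- The finset of all words of length `n`. -/
def V (α : Type*) [Fintype α] : ℕ → Finset (List α)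
  | 0 => {[]}
  | n+1 => (Finset.univ ×ˢ V α n).image fun p => p.1 :: p.2

lemma mem_V {w : List α} {n : ℕ} : w ∈ V α n ↔ w.length = n := by
  induction n generalizing w with
  | zero => simp [V, List.length_eq_zero_iff]
  | succ n ih =>
    simp only [V, Finset.mem_image, Finset.mem_product, Finset.mem_univ, true_and]
    constructor
    · rintro ⟨⟨a, v⟩, hv, rfl⟩
      simp [ih.1 hv]
    · intro h
      cases w with
      | nil => simp at h
      | cons a v =>
        exact ⟨⟨a, v⟩, ih.2 (by simpa using h), rfl⟩

lemma sum_V_succ (n : ℕ) (g : List α → ℝ) :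
    ∑ w ∈ V α (n+1), g w = ∑ a : α, ∑ w ∈ V α n, g (a :: w) := by
  rw [show V α (n+1) = (Finset.univ ×ˢ V α n).image fun p => p.1 :: p.2 from rfl,
    Finset.sum_image (by rintro ⟨a, v⟩ _ ⟨b, u⟩ _ h; simpa using h), Finset.sum_product]

/-- Total prefix weight of words of length `n` from `q`. -/
def Sp (δQ : Q → α → Q) (δW : Q → Option α → ℝ) (q : Q) (n : ℕ) : ℝ :=
  ∑ w ∈ V α n, pw δQ δW q w

/-- Total probability of words of length `n` from `q`. -/
def SP (δQ : Q → α → Q) (δW : Q → Option α → ℝ) (q : Q) (n : ℕ) : ℝ :=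
  ∑ w ∈ V α n, pP δQ δW q w

lemma Sp_zero (δQ : Q → α → Q) (δW : Q → Option α → ℝ) (q : Q) : Sp δQ δW q 0 = 1 := by
  simp [Sp, V, pw_nil]

lemma SP_zero (δQ : Q → α → Q) (δW : Q → Option α → ℝ) (q : Q) :
    SP δQ δW q 0 = δW q none := by
  simp [SP, V, pP, pw_nil]

lemma Sp_succ (δQ : Q → α → Q) (δW : Q → Option α → ℝ) (q : Q) (n : ℕ) :
    Sp δQ δW q (n+1) = ∑ a : α, δW q (some a) * Sp δQ δW (δQ q a) n := by
  rw [Sp, sum_V_succ]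
  simp [pw_cons, Finset.mul_sum, Sp]

lemma SP_succ (δQ : Q → α → Q) (δW : Q → Option α → ℝ) (q : Q) (n : ℕ) :
    SP δQ δW q (n+1) = ∑ a : α, δW q (some a) * SP δQ δW (δQ q a) n := by
  rw [SP, sum_V_succ]
  simp [pP_cons, Finset.mul_sum, SP]


section Bounds

variable {δQ : Q → α → Q} {δW : Q → Option α → ℝ}
variable (hW01 : ∀ q σ, 0 ≤ δW q σ ∧ δW q σ ≤ 1)
variable (hWsum : ∀ q : Q, ∑ σ : Option α, δW q σ = 1)

include hW01

lemma pw_nonneg (q : Q) (w : List α) : 0 ≤ pw δQ δW q w :=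
  Finset.prod_nonneg fun i _ => (hW01 _ _).1

lemma pP_nonneg (q : Q) (w : List α) : 0 ≤ pP δQ δW q w :=
  mul_nonneg (hW01 _ _).1 (pw_nonneg hW01 q w)

lemma Sp_nonneg (q : Q) (n : ℕ) : 0 ≤ Sp δQ δW q n :=
  Finset.sum_nonneg fun w _ => pw_nonneg hW01 q w

lemma SP_nonneg (q : Q) (n : ℕ) : 0 ≤ SP δQ δW q n :=
  Finset.sum_nonneg fun w _ => pP_nonneg hW01 q w

include hWsum

lemma sum_some (q : Q) : ∑ a : α, δW q (some a) = 1 - δW q none := by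
  have := hWsum q
  rw [Fintype.sum_option] at this
  linarith

/-- Telescoping identity. -/
lemma Sp_eq_SP_add (q : Q) (n : ℕ) :
    Sp δQ δW q n = SP δQ δW q n + Sp δQ δW q (n+1) := by
  induction n generalizing q with
  | zero =>
    rw [Sp_zero, SP_zero, Sp_succ]
    simp only [Sp_zero, mul_one]
    rw [sum_some hW01 hWsum q]
    ring
  | succ n ih =>
    rw [Sp_succ, SP_succ, Sp_succ]
    rw [← Finset.sum_add_distrib]
    apply Finset.sum_congr rfl
    intro a _
    rw [ih (δQ q a)]
    ring

lemma sum_range_SP (q : Q) (n : ℕ) :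
    ∑ m ∈ Finset.range n, SP δQ δW q m = 1 - Sp δQ δW q n := by
  induction n with
  | zero => simp [Sp_zero]
  | succ n ih =>
    rw [Finset.sum_range_succ, ih, Sp_eq_SP_add hW01 hWsum q n]
    ring

/-- Maximum over states of the surviving prefix mass at length `n`. -/
lemma Sp_add_le [Nonempty Q] (n m : ℕ) (q : Q) :
    Sp δQ δW q (n + m) ≤
      Sp δQ δW q n * (Finset.univ.sup' Finset.univ_nonempty fun r => Sp δQ δW r m) := by
  set M := Finset.univ.sup' Finset.univ_nonempty fun r => Sp δQ δW r m with hM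
  have hM0 : 0 ≤ M := le_trans (Sp_nonneg (δQ := δQ) hW01 q m)
    (Finset.le_sup' (fun r => Sp δQ δW r m) (Finset.mem_univ q))
  induction n generalizing q with
  | zero =>
    rw [Nat.zero_add, Sp_zero, one_mul]
    exact Finset.le_sup' (fun r => Sp δQ δW r m) (Finset.mem_univ q)
  | succ n ih =>
    rw [show n + 1 + m = (n + m) + 1 from by ring, Sp_succ, Sp_succ, Finset.sum_mul]
    apply Finset.sum_le_sum
    intro a _
    rw [mul_assoc]
    exact mul_le_mul_of_nonneg_left (ih (δQ q a)) (hW01 _ _).1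

end Bounds

end PDFAProof

/-- The probability `P_A(w)` assigned to a sequence `w` by a PDFA with transition
function `δQ`, weight function `δW` (with `none` playing the role of the stopping
symbol `$`), and initial state `qi`:
`P_A(w) = δ_W(δ̂(w), $) · Π_{i=1}^{|w|} δ_W(δ̂(w_{:i−1}), w_i)`. -/
noncomputable def pdfaProb {Q α : Type*} (δQ : Q → α → Q) (δW : Q → Option α → ℝ)
    (qi : Q) (w : List α) : ℝ :=
  δW (List.foldl δQ qi w) none *
    ∏ i : Fin w.length, δW (List.foldl δQ qi (w.take i.1)) (some (w.get i))

/-- a PDFA in which every state can reach, by non-zero transitions, a state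
with positive stopping weight defines a probability distribution over `Σ*`:
`P_A(w) ≥ 0` for all `w` and `∑_{w∈Σ*} P_A(w) = 1`. -/
theorem pdfa_is_language_model {Q α : Type*} [Fintype Q] [Fintype α]
    (δQ : Q → α → Q) (qi : Q) (δW : Q → Option α → ℝ)
    (hW01 : ∀ q σ, 0 ≤ δW q σ ∧ δW q σ ≤ 1)
    (hWsum : ∀ q : Q, ∑ σ : Option α, δW q σ = 1)
    (hreach : ∀ q : Q, ∃ u : List α,
      0 < ∏ i : Fin u.length, δW (List.foldl δQ q (u.take i.1)) (some (u.get i)) ∧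
      0 < δW (List.foldl δQ q u) none) :
    (∀ w : List α, 0 ≤ pdfaProb δQ δW qi w) ∧
    HasSum (pdfaProb δQ δW qi) 1 := by
  classical
  haveI : Nonempty Q := ⟨qi⟩
  have hnn : ∀ w : List α, 0 ≤ pdfaProb δQ δW qi w := fun w => pP_nonneg hW01 qi w
  refine ⟨hnn, ?_⟩
  show HasSum (pP δQ δW qi) 1
  -- stopping words
  choose u hu1 hu2 using hreach
  set K := (Finset.univ.sup fun q => (u q).length) + 1 with hK
  set ε := Finset.univ.inf' Finset.univ_nonempty (fun q => pP δQ δW q (u q)) with hε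
  have hε_pos : 0 < ε := by
    rw [hε, Finset.lt_inf'_iff]
    intro q _
    exact mul_pos (hu2 q) (hu1 q)
  set M := Finset.univ.sup' Finset.univ_nonempty (fun r => Sp δQ δW r K) with hMdef
  have hM_le : M ≤ 1 - ε := by
    apply Finset.sup'_le
    intro q _
    have h1 : ∑ m ∈ Finset.range K, SP δQ δW q m = 1 - Sp δQ δW q K :=
      sum_range_SP hW01 hWsum q K
    have h2 : ε ≤ ∑ m ∈ Finset.range K, SP δQ δW q m := by
      have hlen : (u q).length ∈ Finset.range K := by
        rw [Finset.mem_range, hK, Nat.lt_succ_iff]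
        exact Finset.le_sup (f := fun r => (u r).length) (Finset.mem_univ q)
      calc ε ≤ pP δQ δW q (u q) := Finset.inf'_le _ (Finset.mem_univ q)
        _ ≤ SP δQ δW q (u q).length :=
            Finset.single_le_sum (fun w _ => pP_nonneg hW01 q w) (mem_V.2 rfl)
        _ ≤ ∑ m ∈ Finset.range K, SP δQ δW q m :=
            Finset.single_le_sum (fun m _ => SP_nonneg hW01 q m) hlen
    linarith
  have hM0 : 0 ≤ M := le_trans (Sp_nonneg (δQ := δQ) hW01 qi K)
    (Finset.le_sup' (fun r => Sp δQ δW r K) (Finset.mem_univ qi))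
  have hpow : ∀ n : ℕ, ∀ q : Q, Sp δQ δW q (n * K) ≤ M ^ n := by
    intro n
    induction n with
    | zero => intro q; simp [Sp_zero]
    | succ n ih =>
      intro q
      calc Sp δQ δW q ((n+1) * K) = Sp δQ δW q (n * K + K) := by rw [Nat.succ_mul]
        _ ≤ Sp δQ δW q (n * K) * M := Sp_add_le hW01 hWsum (n * K) K q
        _ ≤ M ^ n * M := mul_le_mul_of_nonneg_right (ih q) hM0
        _ = M ^ (n + 1) := (pow_succ M n).symm
  have hlim : ∀ d : ℝ, 0 < d → ∃ n : ℕ, Sp δQ δW qi n < d := by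
    intro d hd
    have hM1 : M < 1 := lt_of_le_of_lt hM_le (by linarith)
    obtain ⟨n, hn⟩ := exists_pow_lt_of_lt_one hd hM1
    exact ⟨n * K, lt_of_le_of_lt (hpow n qi) hn⟩
  have hWn : ∀ n : ℕ, ∑ w ∈ (Finset.range n).biUnion (V α), pP δQ δW qi w
      = 1 - Sp δQ δW qi n := by
    intro n
    have hdisj : (↑(Finset.range n) : Set ℕ).PairwiseDisjoint (V α) := by
      intro i _ j _ hij
      refine Finset.disjoint_left.2 fun w hwi hwj => hij ?_
      exact (mem_V.1 hwi).symm.trans (mem_V.1 hwj)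
    rw [Finset.sum_biUnion hdisj]
    exact sum_range_SP hW01 hWsum qi n
  have hbound : ∀ s : Finset (List α), ∑ w ∈ s, pP δQ δW qi w ≤ 1 := by
    intro s
    set n := (s.sup fun w => w.length) + 1 with hn
    have hsub : s ⊆ (Finset.range n).biUnion (V α) := by
      intro w hw
      refine Finset.mem_biUnion.2 ⟨w.length, ?_, mem_V.2 rfl⟩
      rw [Finset.mem_range, hn, Nat.lt_succ_iff]
      exact Finset.le_sup (f := fun v => v.length) hw
    calc ∑ w ∈ s, pP δQ δW qi w
        ≤ ∑ w ∈ (Finset.range n).biUnion (V α), pP δQ δW qi w :=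
          Finset.sum_le_sum_of_subset_of_nonneg hsub (fun w _ _ => pP_nonneg hW01 qi w)
      _ = 1 - Sp δQ δW qi n := hWn n
      _ ≤ 1 := by linarith [Sp_nonneg (δQ := δQ) hW01 qi n]
  refine hasSum_of_isLUB_of_nonneg 1 (fun w => pP_nonneg hW01 qi w) ?_
  constructor
  · rintro x ⟨s, rfl⟩
    exact hbound s
  · intro b hb
    by_contra hb1
    push_neg at hb1
    obtain ⟨n, hn⟩ := hlim (1 - b) (by linarith)
    have h3 : ∑ w ∈ (Finset.range n).biUnion (V α), pP δQ δW qi w ≤ b :=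
      hb (Set.mem_range_self _)
    rw [hWn n] at h3
    linarith
end

section
/- Let A = ⟨Q, Σ, δ_Q, q^i, δ_W⟩ be a PDFA such that for every state q ∈ Q there exists a sequence u ∈ Σ* of non-zero transitions from q reaching a stopping state (Π_{i=1}^{|u|} δ_W(δ̂(q, u_{:i−1}), u_i) > 0 and δ_W(δ̂(q, u), $) > 0). Then for every w ∈ Σ*, the prefix probability of the distribution P_A equals the product of the transition weights along w: Σ_{v∈Σ*} P_A(w·v) = Π_{i=1}^{|w|} δ_W(δ̂(w_{:i−1}), w_i). -/
/-!
Let `r q` be the total mass `∑_v P_q(v)` of the PDFA started in `q`. Since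
`P_q(w·v) = (weight of w) · P_{δ̂(q,w)}(v)`, it suffices to show `r ≡ 1`. Grading words by
length shows `r` is finite and satisfies `r q = δ_W(q,$) + ∑_a δ_W(q,a) r(δ_Q(q,a))`, so the
defect `1 - r` is harmonic for the kernel that is killed on stopping. A maximum principle
kills every such harmonic function: at a maximiser `p` of a nonnegative maximum the stopping
weight must vanish and the maximum spreads along every positive transition, but some
positive-weight path from `p` ends in a state with positive stopping weight.
-/

open Finset

namespace PDFA

variable {Q α : Type*} (δQ : Q → α → Q) (δW : Q → Option α → ℝ)

noncomputable def pathWeight (q : Q) (u : List α) : ℝ :=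
  ∏ i : Fin u.length, δW (List.foldl δQ q (u.take i.1)) (some (u.get i))

lemma pathWeight_cons (q : Q) (a : α) (u : List α) :
    pathWeight δQ δW q (a :: u) = δW q (some a) * pathWeight δQ δW (δQ q a) u :=
  Fin.prod_univ_succ _

lemma pdfaProb_eq_mul_pathWeight (q : Q) (w : List α) :
    pdfaProb δQ δW q w = δW (List.foldl δQ q w) none * pathWeight δQ δW q w :=
  rfl

lemma pdfaProb_nil (q : Q) : pdfaProb δQ δW q [] = δW q none := by
  simp [pdfaProb]

lemma pdfaProb_cons (q : Q) (a : α) (v : List α) :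
    pdfaProb δQ δW q (a :: v) = δW q (some a) * pdfaProb δQ δW (δQ q a) v := by
  rw [pdfaProb_eq_mul_pathWeight, pdfaProb_eq_mul_pathWeight, pathWeight_cons, List.foldl_cons]
  ring

lemma pdfaProb_append (q : Q) (w v : List α) :
    pdfaProb δQ δW q (w ++ v) =
      pathWeight δQ δW q w * pdfaProb δQ δW (List.foldl δQ q w) v := by
  induction w generalizing q with
  | nil => simp [pathWeight]
  | cons a w ih =>
    rw [List.cons_append, pdfaProb_cons, ih, pathWeight_cons, List.foldl_cons, mul_assoc]

section Nonneg

variable {δQ δW} (hW : ∀ q σ, 0 ≤ δW q σ)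
include hW

lemma pathWeight_nonneg (q : Q) (u : List α) : 0 ≤ pathWeight δQ δW q u :=
  prod_nonneg fun _ _ => hW _ _

lemma pdfaProb_nonneg (q : Q) (w : List α) : 0 ≤ pdfaProb δQ δW q w :=
  mul_nonneg (hW _ _) (pathWeight_nonneg hW q w)

end Nonneg

variable [Fintype α]

noncomputable def lengthMass (n : ℕ) (q : Q) : ℝ :=
  ∑ f : Fin n → α, pdfaProb δQ δW q (List.ofFn f)

lemma lengthMass_zero (q : Q) : lengthMass δQ δW 0 q = δW q none := by
  simp [lengthMass, pdfaProb_nil]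

lemma lengthMass_succ (n : ℕ) (q : Q) :
    lengthMass δQ δW (n + 1) q = ∑ a, δW q (some a) * lengthMass δQ δW n (δQ q a) := by
  rw [lengthMass, ← (Fin.consEquiv fun _ => α).sum_comp, Fintype.sum_prod_type]
  simp [lengthMass, mul_sum, List.ofFn_succ, pdfaProb_cons]

variable {δW} in
lemma stop_add_sum_eq_one (hWsum : ∀ q, ∑ σ, δW q σ = 1) (q : Q) :
    δW q none + ∑ a, δW q (some a) = 1 := by
  rw [← Fintype.sum_option]
  exact hWsum q

lemma sum_range_succ_lengthMass (n : ℕ) (q : Q) :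
    ∑ k ∈ range (n + 1), lengthMass δQ δW k q =
      δW q none + ∑ a, δW q (some a) * ∑ k ∈ range n, lengthMass δQ δW k (δQ q a) := by
  simp only [sum_range_succ', lengthMass_succ, lengthMass_zero, mul_sum]
  rw [sum_comm, add_comm]

def IsHarmonic (d : Q → ℝ) : Prop :=
  ∀ q, d q = ∑ a, δW q (some a) * d (δQ q a)

def CanStop (q : Q) : Prop :=
  ∃ u, 0 < pathWeight δQ δW q u ∧ 0 < δW (List.foldl δQ q u) none

namespace IsHarmonic

variable {δQ δW} {d : Q → ℝ}

lemma neg (hd : IsHarmonic δQ δW d) : IsHarmonic δQ δW (-d) := fun q => by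
  simp [hd q, sum_neg_distrib]

variable (hd : IsHarmonic δQ δW d) (hW : ∀ q σ, 0 ≤ δW q σ)
  (hWsum : ∀ q, ∑ σ, δW q σ = 1)
include hd hW hWsum

lemma stop_mul_eq_zero_and_eq_of_forall_le {p : Q} (hmax : ∀ q, d q ≤ d p) (hp : 0 ≤ d p) :
    δW p none * d p = 0 ∧ ∀ a, 0 < δW p (some a) → d (δQ p a) = d p := by
  have hgap : ∑ a, δW p (some a) * (d p - d (δQ p a)) = -(δW p none * d p) := by
    simp only [mul_sub, sum_sub_distrib, ← sum_mul, ← hd p]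
    linear_combination d p * stop_add_sum_eq_one hWsum p
  have hterm : ∀ a, 0 ≤ δW p (some a) * (d p - d (δQ p a)) :=
    fun a => mul_nonneg (hW _ _) (sub_nonneg.2 (hmax _))
  have hstop : δW p none * d p = 0 :=
    le_antisymm (by linarith [sum_nonneg fun a (_ : a ∈ univ) => hterm a])
      (mul_nonneg (hW _ _) hp)
  refine ⟨hstop, fun a ha => ?_⟩
  have hzero := (sum_eq_zero_iff_of_nonneg fun a _ => hterm a).1
    (by rw [hgap, hstop, neg_zero]) a (mem_univ a)
  rcases mul_eq_zero.1 hzero with h | h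
  · exact absurd h ha.ne'
  · linarith

lemma foldl_eq_of_forall_le (u : List α) {p : Q} (hmax : ∀ q, d q ≤ d p)
    (hp : 0 ≤ d p) (hu : 0 < pathWeight δQ δW p u) : d (List.foldl δQ p u) = d p := by
  induction u generalizing p with
  | nil => rfl
  | cons a u ih =>
    rw [pathWeight_cons] at hu
    have ha := pos_of_mul_pos_left hu (pathWeight_nonneg hW _ _)
    have hu' := pos_of_mul_pos_right hu (hW _ _)
    have hstep := (hd.stop_mul_eq_zero_and_eq_of_forall_le hW hWsum hmax hp).2 a ha
    rw [List.foldl_cons, ← hstep]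
    exact ih (hstep ▸ hmax) (hstep ▸ hp) hu'

lemma le_zero [Finite Q] (hstop : ∀ q, CanStop δQ δW q) (q : Q) : d q ≤ 0 := by
  have : Nonempty Q := ⟨q⟩
  obtain ⟨p, hmax⟩ := Finite.exists_max d
  refine (hmax q).trans (not_lt.1 fun hp => ?_)
  obtain ⟨u, hu, hend⟩ := hstop p
  have hreach := hd.foldl_eq_of_forall_le hW hWsum u hmax hp.le hu
  have hstop_end := (hd.stop_mul_eq_zero_and_eq_of_forall_le hW hWsum
    (p := List.foldl δQ p u) (hreach ▸ hmax) (hreach ▸ hp.le)).1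
  rw [hreach] at hstop_end
  exact (mul_pos hend hp).ne' hstop_end

lemma eq_zero [Finite Q] (hstop : ∀ q, CanStop δQ δW q) : d = 0 := by
  funext q
  exact le_antisymm (hd.le_zero hW hWsum hstop q)
    (neg_nonpos.1 (hd.neg.le_zero hW hWsum hstop q))

end IsHarmonic

noncomputable def totalMass (q : Q) : ℝ :=
  ∑' v, pdfaProb δQ δW q v

section Stochastic

variable {δQ δW} (hW : ∀ q σ, 0 ≤ δW q σ) (hWsum : ∀ q, ∑ σ, δW q σ = 1)
include hW hWsum

lemma sum_range_lengthMass_le_one (n : ℕ) (q : Q) :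
    ∑ k ∈ range n, lengthMass δQ δW k q ≤ 1 := by
  induction n generalizing q with
  | zero => simp
  | succ n ih =>
    calc ∑ k ∈ range (n + 1), lengthMass δQ δW k q
        ≤ δW q none + ∑ a, δW q (some a) * 1 := by
          rw [sum_range_succ_lengthMass]
          gcongr with a
          · exact hW _ _
          · exact ih _
      _ = 1 := by simpa using stop_add_sum_eq_one hWsum q

lemma summable_lengthMass (q : Q) : Summable fun n => lengthMass δQ δW n q :=
  summable_of_sum_range_le (fun _ => sum_nonneg fun _ _ => pdfaProb_nonneg hW _ _)
    (sum_range_lengthMass_le_one hW hWsum · q)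

lemma totalMass_eq_tsum_lengthMass (q : Q) :
    totalMass δQ δW q = ∑' n, lengthMass δQ δW n q := by
  let f : (Σ n, Fin n → α) → ℝ := fun s => pdfaProb δQ δW q (List.ofFn s.2)
  have hf : Summable f :=
    (summable_sigma_of_nonneg fun _ => pdfaProb_nonneg hW _ _).2
      ⟨fun _ => (hasSum_fintype _).summable, by
        simpa [f, tsum_fintype, lengthMass] using summable_lengthMass hW hWsum q⟩
  rw [totalMass, ← List.equivSigmaTuple.symm.tsum_eq]
  change ∑' s, f s = _
  rw [hf.tsum_sigma]
  simp [f, tsum_fintype, lengthMass]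

lemma totalMass_eq (q : Q) :
    totalMass δQ δW q = δW q none + ∑ a, δW q (some a) * totalMass δQ δW (δQ q a) := by
  simp only [totalMass_eq_tsum_lengthMass hW hWsum]
  rw [(summable_lengthMass hW hWsum q).tsum_eq_zero_add, lengthMass_zero]
  simp only [lengthMass_succ]
  rw [Summable.tsum_finsetSum fun a _ => (summable_lengthMass hW hWsum _).mul_left _]
  simp only [tsum_mul_left]

lemma isHarmonic_one_sub_totalMass : IsHarmonic δQ δW fun q => 1 - totalMass δQ δW q := by
  intro q
  simp only [mul_sub, mul_one, sum_sub_distrib]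
  linear_combination -stop_add_sum_eq_one hWsum q - totalMass_eq hW hWsum q

lemma totalMass_eq_one [Finite Q] (hstop : ∀ q, CanStop δQ δW q) (q : Q) :
    totalMass δQ δW q = 1 :=
  (sub_eq_zero.1 (congrFun ((isHarmonic_one_sub_totalMass hW hWsum).eq_zero hW hWsum hstop) q)).symm

end Stochastic

end PDFA

/-- for a PDFA in which every state can reach, by non-zero transitions, a
state with positive stopping weight, the prefix probability of `P_A` at any `w ∈ Σ*`
equals the product of the transition weights along `w`:
`∑_{v∈Σ*} P_A(w·v) = Π_{i=1}^{|w|} δ_W(δ̂(w_{:i−1}), w_i)`. -/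
theorem pdfa_prefix_prob_eq_weight_product {Q α : Type*} [Fintype Q] [Fintype α]
    (δQ : Q → α → Q) (qi : Q) (δW : Q → Option α → ℝ)
    (hW01 : ∀ q σ, 0 ≤ δW q σ ∧ δW q σ ≤ 1)
    (hWsum : ∀ q : Q, ∑ σ : Option α, δW q σ = 1)
    (hreach : ∀ q : Q, ∃ u : List α,
      0 < ∏ i : Fin u.length, δW (List.foldl δQ q (u.take i.1)) (some (u.get i)) ∧
      0 < δW (List.foldl δQ q u) none) :
    ∀ w : List α,
      ∑' v : List α, pdfaProb δQ δW qi (w ++ v) =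
        ∏ i : Fin w.length, δW (List.foldl δQ qi (w.take i.1)) (some (w.get i)) := by
  intro w
  have hW : ∀ q σ, 0 ≤ δW q σ := fun q σ => (hW01 q σ).1
  calc ∑' v, pdfaProb δQ δW qi (w ++ v)
      = ∑' v, PDFA.pathWeight δQ δW qi w * pdfaProb δQ δW (List.foldl δQ qi w) v := by
        simp only [PDFA.pdfaProb_append]
    _ = PDFA.pathWeight δQ δW qi w * PDFA.totalMass δQ δW (List.foldl δQ qi w) := tsum_mul_left
    _ = PDFA.pathWeight δQ δW qi w := by
        rw [PDFA.totalMass_eq_one hW hWsum hreach, mul_one]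
end

section
/- Let A = ⟨Q, Σ, δ_Q, q^i, δ_W⟩ be a PDFA with nonempty alphabet Σ and |Q| = k ≥ 2, and suppose there is a permutation ρ of Q forming a single k-cycle such that δ_Q(q, σ) = ρ(q) for every q ∈ Q and σ ∈ Σ (the state transitions ignore the input token and cycle through all states). Let q₁, q₂ ∈ Q and d = max_{σ∈Σ_$} |δ_W(q₁, σ) − δ_W(q₂, σ)|. Then for every n ∈ ℕ there exist sequences w, w' ∈ Σ* of length at least n whose final n tokens coincide, yet whose next-token weight vectors differ by d: max_{σ∈Σ_$} |δ_W(δ̂(w), σ) − δ_W(δ̂(w'), σ)| = d. Hence, when d > 0, no model whose next-token prediction is a function of only the last n input tokens (such as an (n+1)-gram) can reproduce the next-token distributions of A; this is the key property of the unbounded-history languages (UHLs). -/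
/-- in a PDFA whose transitions ignore the input token and cycle through
all `k ≥ 2` states via a single `k`-cycle `ρ`, for any two states `q₁, q₂` with
`d = max_{σ∈Σ_$} |δ_W(q₁,σ) − δ_W(q₂,σ)|`, and for every `n`, there are sequences
`w, w'` of length at least `n` whose final `n` tokens coincide yet whose next-token
weight vectors (at the states reached from the initial state) differ by exactly `d`
in sup norm. (Here `none : Option α` plays the role of the stopping symbol `$` and
`List.foldl δQ qi` is the iterated transition `δ̂`.) -/
theorem cyclic_pdfa_unbounded_history {Q α : Type*} [Fintype Q] [DecidableEq Q]
    [Fintype α] [Nonempty α]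
    (k : ℕ) (hk : 2 ≤ k) (hcard : Fintype.card Q = k)
    (δQ : Q → α → Q) (qi : Q) (δW : Q → Option α → ℝ)
    (hW01 : ∀ q σ, 0 ≤ δW q σ ∧ δW q σ ≤ 1)
    (hWsum : ∀ q : Q, ∑ σ : Option α, δW q σ = 1)
    (ρ : Equiv.Perm Q) (hcyc : ρ.IsCycle) (hsupp : ρ.support = Finset.univ)
    (hδ : ∀ (q : Q) (σ : α), δQ q σ = ρ q)
    (q₁ q₂ : Q) (d : ℝ)
    (hd : d = Finset.univ.sup' ⟨none, Finset.mem_univ none⟩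
      (fun σ : Option α => |δW q₁ σ - δW q₂ σ|)) :
    ∀ n : ℕ, ∃ w w' : List α,
      n ≤ w.length ∧ n ≤ w'.length ∧
      w.drop (w.length - n) = w'.drop (w'.length - n) ∧
      Finset.univ.sup' ⟨none, Finset.mem_univ none⟩
        (fun σ : Option α =>
          |δW (List.foldl δQ qi w) σ - δW (List.foldl δQ qi w') σ|) = d := by
  intro n
  obtain ⟨a⟩ := (inferInstance : Nonempty α)
  -- foldl computes powers of ρ
  have hfold : ∀ (l : List α) (q : Q), List.foldl δQ q l = (ρ ^ l.length) q := by
    intro l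
    induction l with
    | nil => intro q; simp
    | cons b t ih =>
      intro q
      simp only [List.foldl_cons, hδ, ih, List.length_cons]
      rw [pow_succ]
      rfl
  -- every state is non-fixed
  have hne : ∀ q : Q, ρ q ≠ q := by
    intro q
    have : q ∈ ρ.support := by rw [hsupp]; exact Finset.mem_univ q
    exact Equiv.Perm.mem_support.mp this
  -- reach any state from qi with arbitrarily large natural power
  have hreach : ∀ q : Q, ∃ m : ℕ, n ≤ m ∧ (ρ ^ m) qi = q := by
    intro q
    have hsc : ρ.SameCycle qi q := by
      obtain ⟨x, hx, hall⟩ := hcyc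
      exact (hall (hne qi)).symm.trans (hall (hne q))
    obtain ⟨i, _, hi⟩ := hsc.exists_pow_eq'
    refine ⟨i + n * orderOf ρ, ?_, ?_⟩
    · calc n = n * 1 := (mul_one n).symm
        _ ≤ n * orderOf ρ := Nat.mul_le_mul_left n (orderOf_pos ρ)
        _ ≤ i + n * orderOf ρ := Nat.le_add_left _ _
    · rw [pow_add, pow_mul', pow_orderOf_eq_one, one_pow, mul_one]
      exact hi
  obtain ⟨m₁, hm₁, hq₁⟩ := hreach q₁
  obtain ⟨m₂, hm₂, hq₂⟩ := hreach q₂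
  refine ⟨List.replicate m₁ a, List.replicate m₂ a, ?_, ?_, ?_, ?_⟩
  · simpa using hm₁
  · simpa using hm₂
  · simp [List.drop_replicate]
    omega
  · rw [hfold, hfold]
    simp only [List.length_replicate, hq₁, hq₂]
    exact hd.symm
end
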